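/- Let d ≥ 1 and let f : ℤ → ℚ be given by a polynomial of degree at most d such that f(m−1) = (−1)^d · f(−m) for every integer m. Let D(X) = (1−X)^{d+1} · Σ_{m≥0} f(m) X^m, a polynomial of degree at most d. Then D is palindromic of degree d: the reversed polynomial D*(X) = X^d · D(1/X) equals D(X). -/

import Mathlib

open Finset PowerSeries fwdDiff

/-! The coefficient of `X ^ N` in `(1 - X) ^ (d + 1) * ∑ f m X ^ m` is the truncated alternating
sum `∑_{k ≤ N} (-1) ^ k C(d + 1, k) f (N - k)`. As `f` is polynomial of degree `≤ d`, its
`(d + 1)`-st forward difference vanishes, i.e. the untruncated sum over `k ≤ d + 1` is zero.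
Hence the coefficients beyond `X ^ d` vanish, and the coefficient of `X ^ (d - n)` is minus the
complementary sum over `k > d - n`, which only sees `f` at negative arguments. The substitution
`k ↦ d + 1 - k` together with `f (-m - 1) = (-1) ^ d f m` turns that into the coefficient of
`X ^ n`. -/

namespace PowerSeries

variable {R : Type*} [CommRing R]

theorem coeff_one_sub_X_pow (n k : ℕ) :
    coeff k ((1 - X : R⟦X⟧) ^ n) = (-1) ^ k * n.choose k := by
  have h : (1 - X : R⟦X⟧) ^ n =
      rescale (-1) ((1 + Polynomial.X : Polynomial R) ^ n : Polynomial R) := by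
    simp [map_pow, rescale_X, sub_eq_add_neg]
  rw [h, coeff_rescale, Polynomial.coeff_coe, Polynomial.coeff_one_add_X_pow]

theorem coeff_one_sub_X_pow_mul_mk (n N : ℕ) (g : ℕ → R) :
    coeff N ((1 - X) ^ n * mk g) = ∑ k ∈ range (N + 1), (-1) ^ k * n.choose k * g (N - k) := by
  rw [coeff_mul, Nat.sum_antidiagonal_eq_sum_range_succ fun i j => coeff i _ * coeff j _]
  simp only [coeff_one_sub_X_pow, coeff_mk]

end PowerSeries

theorem fwdDiff_iter_comp_addMonoidHom {M N G : Type*} [AddCommMonoid M] [AddCommMonoid N]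
    [AddCommGroup G] (φ : M →+ N) (g : N → G) (h : M) (n : ℕ) :
    Δ_[h] ^[n] (g ∘ φ) = Δ_[φ h] ^[n] g ∘ φ := by
  funext x
  simp [fwdDiff_iter_eq_sum_shift]

variable {R : Type*} [CommRing R]

theorem sum_neg_one_pow_mul_choose_mul_sub_eq_zero {f : ℤ → R} {n : ℕ}
    (hf : Δ_[1] ^[n] f = 0) (x : ℤ) :
    ∑ k ∈ range (n + 1), (-1) ^ k * n.choose k * f (x - k) = 0 := by
  have h := congrFun hf (x - n)
  rw [fwdDiff_iter_eq_sum_shift, Pi.zero_apply] at h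
  rw [← h, ← sum_range_reflect]
  refine sum_congr rfl fun k hk => ?_
  have hk : k ≤ n := Nat.lt_succ_iff.mp (mem_range.mp hk)
  rw [Nat.add_sub_cancel, Nat.choose_symm hk, zsmul_eq_mul, nsmul_eq_mul]
  push_cast [hk]
  ring_nf

noncomputable def numeratorSeries (d : ℕ) (f : ℤ → R) : R⟦X⟧ :=
  (1 - X) ^ (d + 1) * PowerSeries.mk fun m : ℕ => f m

namespace numeratorSeries

variable {d : ℕ} {f : ℤ → R}

theorem coeff_eq (N : ℕ) :
    coeff N (numeratorSeries d f) =
      ∑ k ∈ range (N + 1), (-1) ^ k * (d + 1).choose k * f (N - k) := by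
  rw [numeratorSeries, coeff_one_sub_X_pow_mul_mk]
  refine sum_congr rfl fun k hk => ?_
  rw [Nat.cast_sub (Nat.lt_succ_iff.mp (mem_range.mp hk))]

theorem coeff_eq_zero_of_lt (hf : Δ_[1] ^[d + 1] f = 0) {N : ℕ} (hN : d < N) :
    coeff N (numeratorSeries d f) = 0 := by
  rw [coeff_eq, ← sum_neg_one_pow_mul_choose_mul_sub_eq_zero hf N]
  refine (sum_subset (range_subset_range.mpr (by omega)) fun k _ hk => ?_).symm
  rw [Nat.choose_eq_zero_of_lt (by simpa using hk), Nat.cast_zero, mul_zero, zero_mul]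

theorem coeff_symm (hf : Δ_[1] ^[d + 1] f = 0)
    (hsym : ∀ m : ℤ, f (m - 1) = (-1) ^ d * f (-m)) {n : ℕ} (hn : n ≤ d) :
    coeff (d - n) (numeratorSeries d f) = coeff n (numeratorSeries d f) := by
  have hsplit := sum_range_add_sum_Ico
    (fun k => (-1) ^ k * (d + 1).choose k * f ((d - n : ℕ) - k)) (by omega : d - n + 1 ≤ d + 2)
  rw [sum_neg_one_pow_mul_choose_mul_sub_eq_zero hf, ← eq_neg_iff_add_eq_zero] at hsplit
  rw [coeff_eq, coeff_eq, hsplit, ← sum_neg_distrib]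
  symm
  refine sum_nbij' (fun j => d + 1 - j) (fun k => d + 1 - k) ?_ ?_ ?_ ?_ fun j hj => ?_
  iterate 4 · intro j hj; simp only [mem_range, mem_Ico] at hj ⊢; omega
  have hj : j ≤ n := Nat.lt_succ_iff.mp (mem_range.mp hj)
  have hsign : (-1 : R) ^ (d + 1 - j) * (-1) ^ d = -(-1) ^ j := by
    rw [← pow_add, show d + 1 - j + d = j + 2 * (d - j) + 1 by omega, pow_succ, pow_add, pow_mul]
    simp
  have harg : ((d - n : ℕ) : ℤ) - (d + 1 - j : ℕ) = (j - n) - 1 := by omega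
  rw [Nat.choose_symm (by omega), harg, hsym, neg_sub]
  linear_combination ((d + 1).choose j * f (n - j) : R) * hsign

end numeratorSeries

theorem stmt_15_general (d : ℕ) (f : ℤ → ℚ) (p : Polynomial ℚ)
    (hdeg : p.natDegree ≤ d) (hf : ∀ m : ℤ, f m = p.eval (m : ℚ))
    (hsym : ∀ m : ℤ, f (m - 1) = (-1 : ℚ) ^ d * f (-m)) :
    PowerSeries.mk (fun i : ℕ =>
        if i ≤ d then
          PowerSeries.coeff (d - i)
            ((1 - PowerSeries.X) ^ (d + 1) * PowerSeries.mk fun m : ℕ => f (m : ℤ))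
        else 0) =
      (1 - PowerSeries.X) ^ (d + 1) * PowerSeries.mk fun m : ℕ => f (m : ℤ) := by
  have hΔ : Δ_[1] ^[d + 1] f = 0 := by
    rw [show f = p.eval ∘ Int.castAddHom ℚ from funext hf, fwdDiff_iter_comp_addMonoidHom,
      show Int.castAddHom ℚ 1 = 1 from Int.cast_one,
      Polynomial.fwdDiff_iter_eq_zero_of_degree_lt (Nat.lt_succ_of_le hdeg)]
    rfl
  change PowerSeries.mk (fun i => if i ≤ d then coeff (d - i) (numeratorSeries d f) else 0) =
    numeratorSeries d f
  ext n
  rw [coeff_mk]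
  split_ifs with hn
  · exact numeratorSeries.coeff_symm hΔ hsym hn
  · exact (numeratorSeries.coeff_eq_zero_of_lt hΔ (not_le.mp hn)).symm

/-- For `d ≥ 1` and a polynomial function `f : ℤ → ℚ` of degree at most `d`
with `f (m-1) = (-1)^d * f (-m)` for all integers `m`, the polynomial
`D = (1-X)^(d+1) * Σ_{m≥0} f(m) X^m` (of degree at most `d`) is palindromic of degree `d`:
its reversal `D*`, with coefficients `D*_i = D_{d-i}` for `i ≤ d` and `0` for `i > d`,
equals `D`. -/
theorem stmt_15 (d : ℕ) (hd : 1 ≤ d) (f : ℤ → ℚ) (p : Polynomial ℚ)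
    (hdeg : p.natDegree ≤ d) (hf : ∀ m : ℤ, f m = p.eval (m : ℚ))
    (hsym : ∀ m : ℤ, f (m - 1) = (-1 : ℚ) ^ d * f (-m)) :
    PowerSeries.mk (fun i : ℕ =>
        if i ≤ d then
          PowerSeries.coeff (d - i)
            ((1 - PowerSeries.X) ^ (d + 1) * PowerSeries.mk fun m : ℕ => f (m : ℤ))
        else 0) =
      (1 - PowerSeries.X) ^ (d + 1) * PowerSeries.mk fun m : ℕ => f (m : ℤ) :=
  stmt_15_general d f p hdeg hf hsym
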